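/- If α is an odd perfect Gaussian integer, i.e., σ(α) = (1+i)·α and (1+i) ∤ α, then α = π^k · γ² for some Gaussian prime π, odd positive integer k, and Gaussian integer γ with π ∤ γ. -/

import Mathlib

/-!
Reducing modulo the prime `1 + i`, whose residue field is `𝔽₂`, the factor
`1 + π + ⋯ + π^k` of `σ(α)` is divisible by `1 + i` exactly when `π` is odd and `k` is odd.
Since `1 + i` divides `σ(α) = (1 + i) α` exactly once, exactly one exponent `k` is odd and all
the others are even. The unit is absorbed into the distinguished prime:
`ε π^(2t+1) γ² = (ε π)^(2t+1) (ε^(-t) γ)²`.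
-/

open Finset

section General

variable {ι M : Type*}

theorem Prime.exists_mem_finset_dvd_of_not_sq_dvd [CommMonoidWithZero M] [DecidableEq ι]
    {p : M} (hp : Prime p) {s : Finset ι} {f : ι → M}
    (h : p ∣ ∏ i ∈ s, f i) (hsq : ¬ p ^ 2 ∣ ∏ i ∈ s, f i) :
    ∃ i ∈ s, p ∣ f i ∧ ∀ j ∈ s.erase i, ¬ p ∣ f j := by
  obtain ⟨i, hi, hpi⟩ := hp.exists_mem_finset_dvd h
  refine ⟨i, hi, hpi, fun j hj hpj => hsq ?_⟩
  rw [← mul_prod_erase s f hi, pow_two]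
  exact mul_dvd_mul hpi (hpj.trans (dvd_prod_of_mem f hj))

theorem Finset.prod_pow_eq_pow_mul_sq [CommMonoid M] [DecidableEq ι] {s : Finset ι}
    {f : ι → M} {k : ι → ℕ} {i : ι} (hi : i ∈ s) (heven : ∀ j ∈ s.erase i, Even (k j)) :
    ∏ j ∈ s, f j ^ k j = f i ^ k i * (∏ j ∈ s.erase i, f j ^ (k j / 2)) ^ 2 := by
  rw [← mul_prod_erase s _ hi, ← prod_pow]
  congr 1
  refine prod_congr rfl fun j hj => ?_
  rw [← pow_mul, Nat.div_mul_cancel (heven j hj).two_dvd]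

theorem Units.mul_mul_pow_odd_mul_sq [CommMonoid M] (u : Mˣ) (x y : M) (t : ℕ) :
    u * x ^ (2 * t + 1) * y ^ 2 = (u * x) ^ (2 * t + 1) * (↑(u⁻¹ ^ t) * y) ^ 2 := by
  have hu : (u : M) ^ (2 * t + 1) * ↑(u⁻¹ ^ t) ^ 2 = u := by
    rw [← Units.val_pow_eq_pow_val, ← Units.val_pow_eq_pow_val, ← Units.val_mul, ← pow_mul,
      pow_succ', mul_assoc, mul_comm t 2, ← mul_pow, mul_inv_cancel, one_pow, mul_one]
  rw [mul_pow, mul_pow]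
  nth_rewrite 1 [← hu]
  ac_rfl

end General

namespace GaussianInt

/-- Reduction modulo `1 + i`: it sends `i` to `1`. -/
def toZModTwo : GaussianInt →+* ZMod 2 := Zsqrtd.lift ⟨1, by decide⟩

theorem one_add_I_dvd_iff (z : GaussianInt) : (⟨1, 1⟩ : GaussianInt) ∣ z ↔ toZModTwo z = 0 := by
  constructor
  · rintro ⟨w, rfl⟩
    rw [map_mul, show toZModTwo ⟨1, 1⟩ = 0 from rfl, zero_mul]
  · intro h
    obtain ⟨m, hm⟩ : (2 : ℤ) ∣ z.re + z.im := by
      refine (ZMod.intCast_zmod_eq_zero_iff_dvd _ 2).mp ?_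
      simpa [toZModTwo] using h
    exact ⟨⟨m, m - z.re⟩, by ext <;> simp [Zsqrtd.re_mul, Zsqrtd.im_mul]; omega⟩

theorem prime_one_add_I : Prime (⟨1, 1⟩ : GaussianInt) := by
  have hker : RingHom.ker toZModTwo = Ideal.span {⟨1, 1⟩} := by
    ext z
    rw [RingHom.mem_ker, Ideal.mem_span_singleton, one_add_I_dvd_iff]
  rw [← Ideal.span_singleton_prime (by decide), ← hker]
  exact RingHom.ker_isPrime _

theorem one_add_I_dvd_geom_sum_iff (p : GaussianInt) (k : ℕ) :
    (⟨1, 1⟩ : GaussianInt) ∣ ∑ j ∈ range (k + 1), p ^ j ↔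
      Odd k ∧ ¬ (⟨1, 1⟩ : GaussianInt) ∣ p := by
  simp only [one_add_I_dvd_iff, map_sum, map_pow]
  obtain h | h : toZModTwo p = 0 ∨ toZModTwo p = 1 := by
    generalize toZModTwo p = x
    revert x
    decide
  · simp [h, sum_range_succ']
  · simp only [h, one_pow, sum_const, card_range, nsmul_eq_mul, mul_one, one_ne_zero,
      not_false_eq_true, and_true]
    rw [ZMod.natCast_eq_zero_iff_even, Nat.even_add_one, Nat.not_even_iff_odd]

end GaussianInt

theorem odd_perfect_form_general (α : GaussianInt) (n : ℕ)
    (ε : GaussianInt) (hε : IsUnit ε)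
    (π : ℕ → GaussianInt) (k : ℕ → ℕ)
    (hprime : ∀ i ∈ Finset.range n, Prime (π i))
    (hassoc : ∀ i ∈ Finset.range n, ∀ j ∈ Finset.range n, i ≠ j →
      ¬ Associated (π i) (π j))
    (hfact : α = ε * ∏ i ∈ Finset.range n, π i ^ k i)
    (hodd : ¬ (⟨1, 1⟩ : GaussianInt) ∣ α)
    (hperfect :
      (∏ i ∈ Finset.range n, ∑ j ∈ Finset.range (k i + 1), π i ^ j) =
        (⟨1, 1⟩ : GaussianInt) * α) :
    ∃ (p γ : GaussianInt) (m : ℕ), Prime p ∧ Odd m ∧ 0 < m ∧ ¬ p ∣ γ ∧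
      α = p ^ m * γ ^ 2 := by
  have hsq : ¬ (⟨1, 1⟩ : GaussianInt) ^ 2 ∣ ⟨1, 1⟩ * α := by
    rwa [pow_two, mul_dvd_mul_iff_left GaussianInt.prime_one_add_I.ne_zero]
  rw [← hperfect] at hsq
  obtain ⟨i, hi, hdvd, hndvd⟩ :=
    GaussianInt.prime_one_add_I.exists_mem_finset_dvd_of_not_sq_dvd ⟨α, hperfect⟩ hsq
  have hcoprime : ∀ j ∈ range n, k j ≠ 0 → ¬ (⟨1, 1⟩ : GaussianInt) ∣ π j := by
    refine fun j hj hk hπ => hodd ?_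
    rw [hfact]
    exact (dvd_pow hπ hk).trans
      ((dvd_prod_of_mem (fun i => π i ^ k i) hj).trans (dvd_mul_left _ _))
  have hodd_i : Odd (k i) := ((GaussianInt.one_add_I_dvd_geom_sum_iff _ _).mp hdvd).1
  have heven : ∀ j ∈ (range n).erase i, Even (k j) := by
    refine fun j hj => Nat.not_odd_iff_even.mp fun hk => hndvd j hj ?_
    exact (GaussianInt.one_add_I_dvd_geom_sum_iff _ _).mpr
      ⟨hk, hcoprime j (mem_of_mem_erase hj) hk.pos.ne'⟩
  set γ := ∏ j ∈ (range n).erase i, π j ^ (k j / 2)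
  have hγ : ¬ π i ∣ γ := by
    rw [(hprime i hi).dvd_finsetProd_iff]
    rintro ⟨j, hj, hπj⟩
    exact hassoc i hi j (mem_of_mem_erase hj) (ne_of_mem_erase hj).symm
      ((hprime i hi).associated_of_dvd (hprime j (mem_of_mem_erase hj))
        ((hprime i hi).dvd_of_dvd_pow hπj))
  obtain ⟨u, rfl⟩ := hε
  obtain ⟨t, ht⟩ := hodd_i
  refine ⟨u * π i, ↑(u⁻¹ ^ t) * γ, k i, ?_, ⟨t, ht⟩, by omega, ?_, ?_⟩
  · exact (associated_unit_mul_left _ _ u.isUnit).symm.prime (hprime i hi)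
  · rwa [Units.mul_left_dvd, Units.dvd_mul_left]
  · rw [hfact, prod_pow_eq_pow_mul_sq hi heven, ← mul_assoc, ht, Units.mul_mul_pow_odd_mul_sq]

/-- Euler-style form of odd perfect Gaussian integers.
`α` has prime factorization `ε * ∏ πᵢ ^ kᵢ` with `ε` a unit and the `πᵢ`
pairwise non-associate first-quadrant Gaussian primes; perfect means
`σ(α) = (1+i) α` where `σ(α) = ∏ (1 + πᵢ + ⋯ + πᵢ^{kᵢ})`. -/
theorem odd_perfect_form (α : GaussianInt) (n : ℕ)
    (ε : GaussianInt) (hε : IsUnit ε)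
    (π : ℕ → GaussianInt) (k : ℕ → ℕ)
    (hprime : ∀ i ∈ Finset.range n, Prime (π i))
    (hquad : ∀ i ∈ Finset.range n, 0 < (π i).re ∧ 0 ≤ (π i).im)
    (hpos : ∀ i ∈ Finset.range n, 0 < k i)
    (hassoc : ∀ i ∈ Finset.range n, ∀ j ∈ Finset.range n, i ≠ j →
      ¬ Associated (π i) (π j))
    (hfact : α = ε * ∏ i ∈ Finset.range n, π i ^ k i)
    (hodd : ¬ (⟨1, 1⟩ : GaussianInt) ∣ α)
    (hperfect :
      (∏ i ∈ Finset.range n, ∑ j ∈ Finset.range (k i + 1), π i ^ j) =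
        (⟨1, 1⟩ : GaussianInt) * α) :
    ∃ (p γ : GaussianInt) (m : ℕ), Prime p ∧ Odd m ∧ 0 < m ∧ ¬ p ∣ γ ∧
      α = p ^ m * γ ^ 2 :=
  odd_perfect_form_general α n ε hε π k hprime hassoc hfact hodd hperfect
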